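/- Suppose the labeled space (E,L,𝔅̄) satisfies: for every finite subset {A_1,…,A_N} of 𝔅̄ and every K ≥ 1 there exists m_0 ≥ 1 such that A_{i_1}E^{≤K}A_{i_2}⋯E^{≤K}A_{i_n} = ∅ for all n > m_0 and all choices i_j ∈ {1,…,N}. Then for every representation {s_a, p_A} of (E,L,𝔅̄) in a C*-algebra, any finite self-adjoint set F = {s_{α_i} p_{A_i} s_{β_i}* : 1 ≤ i ≤ N} with A_i ∈ 𝔅̄, A_i ⊆ r(α_i) ∩ r(β_i), and α_i, β_i labeled paths or the empty word (with s of the empty word interpreted as the identity and r of the empty word as E^0) is contained in a finite-dimensional *-subalgebra. -/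

import Mathlib

/-! # Common framework for labeled graph C*-algebras

Directed graphs, finite paths, labeled spaces `(E, L, 𝔅̄)` where `𝔅̄` is the
smallest accommodating set closed under relative complements (and containing
the sink parts of its members), loops and generalized loops, representations
of labeled spaces in C*-algebras, gauge actions, infinite projections,
AF algebras, and closed two-sided ideals. -/

noncomputable section

/-- A directed graph with vertex set `V` and edge set `E`. -/
structure DirGraph (V : Type*) (E : Type*) where
  src : E → V
  rng : E → V

variable {V E 𝒜 : Type*}

/-- A (finite) path of positive length in a directed graph: a nonempty list of
composable edges. -/
structure GPath (G : DirGraph V E) where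
  edges : List E
  ne : edges ≠ []
  chain : edges.Chain' fun e f => G.rng e = G.src f

namespace GPath

variable {G : DirGraph V E}

/-- The source vertex of a path. -/
def source (p : GPath G) : V := G.src (p.edges.head p.ne)

/-- The range vertex of a path. -/
def range (p : GPath G) : V := G.rng (p.edges.getLast p.ne)

/-- The length of a path. -/
def length (p : GPath G) : ℕ := p.edges.length

/-- The label word of a path under a labeling `L`. -/
def label (L : E → 𝒜) (p : GPath G) : List 𝒜 := p.edges.map L

end GPath

/-- The set of sinks of a graph (vertices emitting no edge). -/
def DirGraph.sinks (G : DirGraph V E) : Set V := {v | ∀ e, G.src e ≠ v}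

/-- `w ∈ L*(E)`: `w` is the label of some path of positive length. -/
def IsLabelWord (G : DirGraph V E) (L : E → 𝒜) (w : List 𝒜) : Prop :=
  ∃ p : GPath G, p.label L = w

/-- The range `r(w)` of a labeled path `w`. -/
def rngW (G : DirGraph V E) (L : E → 𝒜) (w : List 𝒜) : Set V :=
  {v | ∃ p : GPath G, p.label L = w ∧ p.range = v}

/-- The relative range `r(A, w)` of a labeled path `w` with respect to `A`. -/
def relRng (G : DirGraph V E) (L : E → 𝒜) (A : Set V) (w : List 𝒜) : Set V :=
  {v | ∃ p : GPath G, p.label L = w ∧ p.source ∈ A ∧ p.range = v}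

/-- `L(A E^n)`: labels of paths of length exactly `n` with source in `A`. -/
def labelsFromLen (G : DirGraph V E) (L : E → 𝒜) (A : Set V) (n : ℕ) : Set (List 𝒜) :=
  {w | ∃ p : GPath G, p.source ∈ A ∧ p.length = n ∧ p.label L = w}

/-- `L(A E^{≤n})`: labels of paths of length between `1` and `n` with source in `A`. -/
def labelsFromLe (G : DirGraph V E) (L : E → 𝒜) (A : Set V) (n : ℕ) : Set (List 𝒜) :=
  {w | ∃ p : GPath G, p.source ∈ A ∧ p.length ≤ n ∧ p.label L = w}

/-- `L(A E^{≥n})`: labels of paths of length at least `n` (and at least `1`)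
with source in `A`. -/
def labelsFromGe (G : DirGraph V E) (L : E → 𝒜) (A : Set V) (n : ℕ) : Set (List 𝒜) :=
  {w | ∃ p : GPath G, p.source ∈ A ∧ n ≤ p.length ∧ p.label L = w}

/-- `L(E^n A)`: labels of paths of length exactly `n` with range in `A`. -/
def labelsToLen (G : DirGraph V E) (L : E → 𝒜) (n : ℕ) (A : Set V) : Set (List 𝒜) :=
  {w | ∃ p : GPath G, p.range ∈ A ∧ p.length = n ∧ p.label L = w}

/-- `L(E^{≤l} v)`: labels of paths of length between `1` and `l` with range `v`. -/
def labelsToLe (G : DirGraph V E) (L : E → 𝒜) (l : ℕ) (v : V) : Set (List 𝒜) :=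
  {w | ∃ p : GPath G, p.range = v ∧ p.length ≤ l ∧ p.label L = w}

/-- `𝔅̄`: the smallest accommodating set for `(E, L)` (containing the ranges
`r(α)` for `α ∈ L*(E)` and closed under relative ranges, finite intersections
and finite unions) that is moreover closed under relative complements and
contains `A_sk = A ∩ sinks` for every `A` belonging to it. -/
inductive Bbar (G : DirGraph V E) (L : E → 𝒜) : Set V → Prop
  | base (w : List 𝒜) (hw : IsLabelWord G L w) : Bbar G L (rngW G L w)
  | rel (A : Set V) (w : List 𝒜) (hA : Bbar G L A) (hw : IsLabelWord G L w) :
      Bbar G L (relRng G L A w)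
  | inter (A B : Set V) (hA : Bbar G L A) (hB : Bbar G L B) : Bbar G L (A ∩ B)
  | union (A B : Set V) (hA : Bbar G L A) (hB : Bbar G L B) : Bbar G L (A ∪ B)
  | diff (A B : Set V) (hA : Bbar G L A) (hB : Bbar G L B) : Bbar G L (A \ B)
  | sk (A : Set V) (hA : Bbar G L A) : Bbar G L (A ∩ G.sinks)

/-- The standing assumptions on a labeled space `(E, L, 𝔅̄)`: weakly
left-resolving, set-finite, receiver set-finite, and no sink is a source. -/
structure StandingAssumptions (G : DirGraph V E) (L : E → 𝒜) : Prop where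
  wlr : ∀ A B : Set V, Bbar G L A → Bbar G L B → ∀ w : List 𝒜, IsLabelWord G L w →
    relRng G L A w ∩ relRng G L B w = relRng G L (A ∩ B) w
  setFinite : ∀ A : Set V, Bbar G L A → ∀ n : ℕ, 1 ≤ n → (labelsFromLen G L A n).Finite
  receiverSetFinite : ∀ A : Set V, Bbar G L A → ∀ n : ℕ, 1 ≤ n → (labelsToLen G L n A).Finite
  sinkNotSource : ∀ v ∈ G.sinks, ∃ e, G.rng e = v

/-- The `n`-fold concatenation `w^n` of a word `w`. -/
def wordPow (w : List 𝒜) (n : ℕ) : List 𝒜 := (List.replicate n w).flatten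

/-- A labeled path is repeatable if all its powers `w^n`, `n ≥ 1`, are again
labeled paths. -/
def Repeatable (G : DirGraph V E) (L : E → 𝒜) (w : List 𝒜) : Prop :=
  ∀ n : ℕ, 1 ≤ n → IsLabelWord G L (wordPow w n)

/-- The generalized vertex `[v]_l`: all non-source vertices receiving exactly
the same labeled paths of length at most `l` as `v` does. -/
def gvtx (G : DirGraph V E) (L : E → 𝒜) (l : ℕ) (v : V) : Set V :=
  {u | (∃ e, G.rng e = u) ∧ labelsToLe G L l u = labelsToLe G L l v}

/-- A generalized loop at `A`: a labeled path `α ∈ L(A E^{≥1} A)`. -/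
def IsGenLoop (G : DirGraph V E) (L : E → 𝒜) (A : Set V) (α : List 𝒜) : Prop :=
  ∃ p : GPath G, p.label L = α ∧ p.source ∈ A ∧ p.range ∈ A

/-- A loop at `A`: a generalized loop `α` at `A` such that `A ⊆ r(A, α)`. -/
def IsLoop (G : DirGraph V E) (L : E → 𝒜) (A : Set V) (α : List 𝒜) : Prop :=
  IsGenLoop G L A α ∧ A ⊆ relRng G L A α

/-- The nonempty initial segments (initial paths) of a word `α`. -/
def initialSegs (α : List 𝒜) : Set (List 𝒜) := {w | w ≠ [] ∧ w <+: α}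

/-- A loop `α` at `A` has an exit if (i) the initial segments of `α` form a
proper subset of `L(A E^{≤|α|})`, or (ii) `r(A, α_{[1,i]})` contains a sink for
some `1 ≤ i ≤ |α|`, or (iii) `A` is a proper subset of `r(A, α)`. -/
def HasExitLoop (G : DirGraph V E) (L : E → 𝒜) (A : Set V) (α : List 𝒜) : Prop :=
  initialSegs α ⊂ labelsFromLe G L A α.length ∨
  (∃ k : ℕ, 1 ≤ k ∧ k ≤ α.length ∧ (relRng G L A (α.take k) ∩ G.sinks).Nonempty) ∨
  A ⊂ relRng G L A α

/-- `A_0 E^{≤K} A_1 ⋯ E^{≤K} A_m ≠ ∅`: existence of `m` consecutively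
composable paths, each of length between `1` and `K`, the `j`-th going from
`As j` to `As (j+1)`. -/
def ChainExists (G : DirGraph V E) (As : ℕ → Set V) (K m : ℕ) : Prop :=
  ∃ xs : Fin m → GPath G,
    (∀ j : Fin m, (xs j).length ≤ K ∧ (xs j).source ∈ As j.val ∧
      (xs j).range ∈ As (j.val + 1)) ∧
    ∀ (j : ℕ) (h : j + 1 < m),
      (xs ⟨j, Nat.lt_of_succ_lt h⟩).range = (xs ⟨j + 1, h⟩).source

/-- Same as `ChainExists` but with all paths of length exactly `K`
(i.e. `A_0 E^K A_1 ⋯ E^K A_m ≠ ∅`). -/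
def ChainExistsExact (G : DirGraph V E) (As : ℕ → Set V) (K m : ℕ) : Prop :=
  ∃ xs : Fin m → GPath G,
    (∀ j : Fin m, (xs j).length = K ∧ (xs j).source ∈ As j.val ∧
      (xs j).range ∈ As (j.val + 1)) ∧
    ∀ (j : ℕ) (h : j + 1 < m),
      (xs ⟨j, Nat.lt_of_succ_lt h⟩).range = (xs ⟨j + 1, h⟩).source

/-- Condition (a): for every finite family `A_1, …, A_N` in `𝔅̄` and every
`K ≥ 1` there is `m₀ ≥ 1` such that
`A_{i_1} E^{≤K} A_{i_2} ⋯ E^{≤K} A_{i_n} = ∅` (`n` sets, `n - 1` path factors)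
for all `n > m₀` and all choices of indices. -/
def CondA (G : DirGraph V E) (L : E → 𝒜) : Prop :=
  ∀ (N : ℕ) (As : Fin N → Set V), (∀ i, Bbar G L (As i)) → ∀ K : ℕ, 1 ≤ K →
    ∃ m0 : ℕ, 1 ≤ m0 ∧ ∀ n : ℕ, m0 < n → ∀ ι : ℕ → Fin N,
      ¬ ChainExists G (fun j => As (ι j)) K (n - 1)

/-- A word is agreeable (for level `l`) if it is of the form `β^k β'` with
`β, β' ∈ L(E^{≤l})` and `β'` a nonempty initial segment of `β`. -/
def AgreeableW (G : DirGraph V E) (L : E → 𝒜) (l : ℕ) (α : List 𝒜) : Prop :=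
  ∃ (k : ℕ) (β β' : List 𝒜), IsLabelWord G L β ∧ IsLabelWord G L β' ∧
    β.length ≤ l ∧ β' ≠ [] ∧ β' <+: β ∧ α = wordPow β k ++ β'

/-- A representation of the labeled space `(E, L, 𝔅̄)` in a (C*-)algebra `B`:
projections `p A`, `A ∈ 𝔅̄`, and partial isometries `s a`, `a ∈ 𝒜`, satisfying
the defining relations of a labeled graph C*-algebra. -/
structure LRep (G : DirGraph V E) (L : E → 𝒜) (B : Type*)
    [NonUnitalRing B] [StarRing B] where
  p : Set V → B
  s : 𝒜 → B
  p_empty : p ∅ = 0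
  p_sa : ∀ A : Set V, Bbar G L A → star (p A) = p A
  p_mul : ∀ A A' : Set V, Bbar G L A → Bbar G L A' → p A * p A' = p (A ∩ A')
  p_union : ∀ A A' : Set V, Bbar G L A → Bbar G L A' →
    p (A ∪ A') = p A + p A' - p (A ∩ A')
  s_pi : ∀ a : 𝒜, s a * star (s a) * s a = s a
  p_s : ∀ (A : Set V) (a : 𝒜), Bbar G L A → p A * s a = s a * p (relRng G L A [a])
  s_s : ∀ a : 𝒜, star (s a) * s a = p (rngW G L [a])
  s_orth : ∀ a b : 𝒜, a ≠ b → star (s a) * s b = 0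
  ck : ∀ A : Set V, Bbar G L A →
    p A = (∑ᶠ a ∈ {a : 𝒜 | ∃ e, G.src e ∈ A ∧ L e = a},
      s a * p (relRng G L A [a]) * star (s a)) + p (A ∩ G.sinks)

/-- `s_α` for a word `α`: the product of the partial isometries of its letters
(junk value `0` on the empty word, which is never used). -/
def sWord {B : Type*} [NonUnitalRing B] (s : 𝒜 → B) : List 𝒜 → B
  | [] => 0
  | [a] => s a
  | a :: b :: w => s a * sWord s (b :: w)

/-- The range of a word in `L^#(E)` (`none` is the empty word, with range all
of `E^0`). -/
def owordRng (G : DirGraph V E) (L : E → 𝒜) : Option (List 𝒜) → Set V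
  | none => Set.univ
  | some w => rngW G L w

/-- The relative range of a word in `L^#(E)` with respect to `A` (`none` is
the empty word, with `r(A, ε) = A`). -/
def relRngE (G : DirGraph V E) (L : E → 𝒜) (A : Set V) : Option (List 𝒜) → Set V
  | none => A
  | some w => relRng G L A w

/-- The element `s_α p_A s_β*` of a representation, where `α`, `β` are words in
`L^#(E)` (`none` being the empty word `ε` with `s_ε` the identity). -/
def LRep.elt {B : Type*} [NonUnitalRing B] [StarRing B] {G : DirGraph V E} {L : E → 𝒜}
    (rep : LRep G L B) : Option (List 𝒜) → Set V → Option (List 𝒜) → B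
  | none, A, none => rep.p A
  | some α, A, none => sWord rep.s α * rep.p A
  | none, A, some β => rep.p A * star (sWord rep.s β)
  | some α, A, some β => sWord rep.s α * rep.p A * star (sWord rep.s β)

/-- A projection `q` is infinite if there is a partial isometry `u` with
`u* u = q`, `u u* ≤ q` and `u u* ≠ q`. -/
def IsInfiniteProjection (B : Type*) [NonUnitalRing B] [StarRing B] [PartialOrder B]
    (q : B) : Prop :=
  star q = q ∧ q * q = q ∧ ∃ u : B, star u * u = q ∧ u * star u ≤ q ∧ u * star u ≠ q

/-- A C*-algebra is AF if every finite subset can be approximated within any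
`ε > 0` from a finite-dimensional *-subalgebra. -/
def IsAFAlgebra (B : Type*) [NonUnitalNormedRing B] [StarRing B] [NormedSpace ℂ B] : Prop :=
  ∀ (F : Finset B) (ε : ℝ), 0 < ε →
    ∃ D : NonUnitalStarSubalgebra ℂ B, FiniteDimensional ℂ D ∧
      ∀ x ∈ F, ∃ y ∈ (D : Set B), ‖x - y‖ < ε

/-- A gauge action for a representation: a strongly continuous action of the
circle group by *-automorphisms fixing the projections and scaling the
generating partial isometries. -/
structure GaugeAction {B : Type*} [NonUnitalCStarAlgebra B]
    (G : DirGraph V E) (L : E → 𝒜) (rep : LRep G L B) where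
  γ : Circle → B ≃⋆ₐ[ℂ] B
  γ_mul : ∀ z w : Circle, γ (z * w) = (γ w).trans (γ z)
  γ_continuous : ∀ x : B, Continuous fun z => γ z x
  γ_s : ∀ (z : Circle) (a : 𝒜), γ z (rep.s a) = (z : ℂ) • rep.s a
  γ_p : ∀ (z : Circle) (A : Set V), Bbar G L A → γ z (rep.p A) = rep.p A

/-- The representation generates `B` as a C*-algebra. -/
def GeneratesAlg {B : Type*} [NonUnitalCStarAlgebra B]
    (G : DirGraph V E) (L : E → 𝒜) (rep : LRep G L B) : Prop :=
  closure (NonUnitalStarAlgebra.adjoin ℂ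
    ({x : B | ∃ a : 𝒜, x = rep.s a} ∪ {x : B | ∃ A : Set V, Bbar G L A ∧ x = rep.p A}) : Set B)
    = Set.univ

/-- A closed two-sided ideal of a C*-algebra (as a set). -/
def IsClosedTwoSidedIdealSet (B : Type*) [NonUnitalNormedRing B] [NormedSpace ℂ B]
    (I : Set B) : Prop :=
  IsClosed I ∧ (0 : B) ∈ I ∧ (∀ x ∈ I, ∀ y ∈ I, x + y ∈ I) ∧
    (∀ (c : ℂ), ∀ x ∈ I, c • x ∈ I) ∧ ∀ x ∈ I, ∀ y : B, x * y ∈ I ∧ y * x ∈ I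

/-- The closed two-sided ideal generated by an element. -/
def closedIdealGen (B : Type*) [NonUnitalNormedRing B] [NormedSpace ℂ B] (q : B) : Set B :=
  ⋂₀ {I : Set B | IsClosedTwoSidedIdealSet B I ∧ q ∈ I}

/-! Write `s_α p_A s_β* = (s_α p_A)(s_β p_A)*`. Call words `𝒲` (closed under concatenation and
nonempty suffixes) and sets `𝒞 ⊆ 𝔅̄` (closed under intersections and the relative ranges
`r(·, w)`, `w ∈ 𝒲`, and containing every `r(w)`) admissible. The elements `s_μ p_C`
(`μ ∈ 𝒲 ∪ {ε}`, `C ∈ 𝒞`) are then closed under products, and `(s_ν p_D)* (s_μ p_C)` is `0`, such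
an element, or the adjoint of one, according as `ν` and `μ` are incomparable or one extends the
other. Hence `0` and the products `x y*` of such elements form a set closed under products and
adjoints, which spans a finite-dimensional *-algebra once it is finite. It is finite when `𝒞` is
finite and `r(w) ≠ ∅` for only finitely many `w ∈ 𝒲`, since `s_w* s_w = p_{r(w)}` forces
`s_w = 0` otherwise.

Condition (a) yields a finite admissible family: `𝒲` consists of the concatenations of nonempty
suffixes `σ` of the `α_i, β_i`, and `𝒞` of the intersections of the `A_i`, the `r(σ)` and their
relative ranges. A path labelled by a concatenation of `m` pieces runs through `m + 1` sets of the
finite family `{A_i} ∪ {r(σ)}` with steps of length at most `max |σ|`, so relative ranges along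
long concatenations are empty. -/

section StarAlgebra

variable {𝕜 B : Type*} [Field 𝕜] [StarRing 𝕜] [NonUnitalRing B] [StarRing B] [Module 𝕜 B]
  [IsScalarTower 𝕜 B B] [SMulCommClass 𝕜 B B] [StarModule 𝕜 B]

lemma finiteDimensional_adjoin_of_finite {X : Set B} (hX : X.Finite)
    (hmul : ∀ x ∈ X, ∀ y ∈ X, x * y ∈ X) (hstar : ∀ x ∈ X, star x ∈ X) :
    FiniteDimensional 𝕜 (NonUnitalStarAlgebra.adjoin 𝕜 X) := by
  let S : Subsemigroup B := ⟨X, fun hx hy => hmul _ hx _ hy⟩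
  have hXS : X ∪ star X = S := Set.union_eq_left.mpr fun x hx => star_star x ▸ hstar _ hx
  have hspan := NonUnitalStarAlgebra.adjoin_eq_span (R := 𝕜) X
  rw [hXS, Subsemigroup.closure_eq] at hspan
  have : FiniteDimensional 𝕜 (Submodule.span 𝕜 (S : Set B)) :=
    FiniteDimensional.span_of_finite 𝕜 hX
  rw [← hspan] at this
  exact this

lemma exists_finiteDimensional_of_mul_star {Y : Set B} (hY : Y.Finite)
    (hmul : ∀ x ∈ Y, ∀ y ∈ Y, x * y ∈ Y)
    (hcancel : ∀ x ∈ Y, ∀ y ∈ Y, star x * y = 0 ∨ star x * y ∈ Y ∨ star y * x ∈ Y) :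
    ∃ D : NonUnitalStarSubalgebra 𝕜 B, FiniteDimensional 𝕜 D ∧
      ∀ y ∈ Y, ∀ z ∈ Y, y * star z ∈ D := by
  set X : Set B := insert 0 (Set.image2 (fun y z => y * star z) Y Y)
  have hXmul : ∀ a ∈ X, ∀ b ∈ X, a * b ∈ X := by
    rintro _ (rfl | ⟨y, hy, z, hz, rfl⟩) _ (rfl | ⟨y', hy', z', hz', rfl⟩)
    any_goals simp only [zero_mul, mul_zero]; exact Set.mem_insert 0 _
    have hassoc : y * star z * (y' * star z') = y * (star z * y') * star z' := by
      simp only [mul_assoc]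
    rcases hcancel z hz y' hy' with h | h | h
    · rw [hassoc, h, mul_zero, zero_mul]
      exact Set.mem_insert 0 _
    · rw [hassoc]
      exact Or.inr ⟨_, hmul y hy _ h, z', hz', rfl⟩
    · refine Or.inr ⟨y, hy, z' * (star y' * z), hmul z' hz' _ h, ?_⟩
      simp only [hassoc, star_mul, star_star, mul_assoc]
  have hXstar : ∀ a ∈ X, star a ∈ X := by
    rintro _ (rfl | ⟨y, hy, z, hz, rfl⟩)
    · rw [star_zero]
      exact Set.mem_insert 0 _
    · exact Or.inr ⟨z, hz, y, hy, by rw [star_mul, star_star]⟩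
  have hX : X.Finite := (hY.image2 _ hY).insert 0
  exact ⟨_, finiteDimensional_adjoin_of_finite hX hXmul hXstar,
    fun y hy z hz => NonUnitalStarAlgebra.subset_adjoin 𝕜 X (Or.inr ⟨y, hy, z, hz, rfl⟩)⟩

end StarAlgebra

/-- Unlike `FiniteInter.finiteInterClosure`, this does not contain `univ`, which need not lie
in `𝔅̄`. -/
inductive InterClosure {α : Type*} (𝒢 : Set (Set α)) : Set (Set α)
  | of_mem {g : Set α} : g ∈ 𝒢 → InterClosure 𝒢 g
  | inter {C D : Set α} : InterClosure 𝒢 C → InterClosure 𝒢 D → InterClosure 𝒢 (C ∩ D)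

namespace InterClosure

variable {α : Type*} {𝒢 : Set (Set α)}

lemma exists_eq_sInter {C : Set α} (hC : C ∈ InterClosure 𝒢) : ∃ T ⊆ 𝒢, ⋂₀ T = C := by
  induction hC with
  | of_mem hg => exact ⟨{_}, Set.singleton_subset_iff.mpr hg, Set.sInter_singleton _⟩
  | inter _ _ ihC ihD =>
    obtain ⟨T, hT, rfl⟩ := ihC
    obtain ⟨T', hT', rfl⟩ := ihD
    exact ⟨T ∪ T', Set.union_subset hT hT', Set.sInter_union T T'⟩

protected lemma finite (h𝒢 : 𝒢.Finite) : (InterClosure 𝒢).Finite :=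
  (h𝒢.powerset.image Set.sInter).subset fun _ hC => exists_eq_sInter hC

end InterClosure

section ConcatClosure

variable {α : Type*}

def concatClosure (S : Set (List α)) : Set (List α) :=
  {w | ∃ l : List (List α), l ≠ [] ∧ (∀ σ ∈ l, σ ∈ S) ∧ l.flatten = w}

lemma mem_concatClosure_of_mem {S : Set (List α)} {σ : List α} (hσ : σ ∈ S) :
    σ ∈ concatClosure S :=
  ⟨[σ], List.cons_ne_nil σ [], by simpa using hσ, by simp⟩

lemma ne_nil_of_mem_concatClosure {S : Set (List α)} (hS : ∀ σ ∈ S, σ ≠ []) {w : List α}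
    (hw : w ∈ concatClosure S) : w ≠ [] := by
  obtain ⟨l, hl, hlS, rfl⟩ := hw
  obtain ⟨σ, l, rfl⟩ := List.exists_cons_of_ne_nil hl
  simp [hS σ (hlS σ List.mem_cons_self)]

lemma append_mem_concatClosure {S : Set (List α)} {u v : List α} (hu : u ∈ concatClosure S)
    (hv : v ∈ concatClosure S) : u ++ v ∈ concatClosure S := by
  obtain ⟨l, hl, hlS, rfl⟩ := hu
  obtain ⟨l', -, hl'S, rfl⟩ := hv
  exact ⟨l ++ l', by simp [hl], fun x hx => (List.mem_append.mp hx).elim (hlS x) (hl'S x),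
    List.flatten_append⟩

lemma mem_concatClosure_of_append_mem {S : Set (List α)}
    (hS : ∀ u τ, τ ≠ [] → u ++ τ ∈ S → τ ∈ S) {τ : List α} (hτ : τ ≠ []) :
    ∀ (l : List (List α)), (∀ σ ∈ l, σ ∈ S) → ∀ u, u ++ τ = l.flatten → τ ∈ concatClosure S
  | [], _, u, h => by simp_all
  | σ :: l, hl, u, h => by
    rw [List.flatten_cons, List.append_eq_append_iff] at h
    rcases h with ⟨a, rfl, rfl⟩ | ⟨c, rfl, hc⟩
    · rcases eq_or_ne a [] with rfl | ha
      · exact mem_concatClosure_of_append_mem hS hτ l (fun x hx => hl x (by simp [hx])) [] rfl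
      · exact ⟨a :: l, List.cons_ne_nil a l, by
          simpa using ⟨hS u a ha (hl _ List.mem_cons_self), fun x hx => hl x (by simp [hx])⟩,
          rfl⟩
    · exact mem_concatClosure_of_append_mem hS hτ l (fun x hx => hl x (by simp [hx])) c hc.symm

lemma finite_flatten_of_length_le {S : Set (List α)} (hS : S.Finite) (n : ℕ) :
    {w | ∃ l : List (List α), (∀ σ ∈ l, σ ∈ S) ∧ l.length ≤ n ∧ l.flatten = w}.Finite := by
  have := hS.to_subtype
  refine ((List.finite_length_le S n).image fun l => (l.map Subtype.val).flatten).subset ?_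
  rintro _ ⟨l, hl, hlen, rfl⟩
  lift l to List S using hl
  exact ⟨l, by simpa using hlen, rfl⟩

end ConcatClosure

namespace GPath

variable {G : DirGraph V E}

lemma label_ne_nil (L : E → 𝒜) (p : GPath G) : p.label L ≠ [] := by
  simpa [label] using p.ne

lemma length_label (L : E → 𝒜) (p : GPath G) : (p.label L).length = p.length := by
  simp [label, length]

lemma exists_append (L : E → 𝒜) (q r : GPath G) (h : q.range = r.source) :
    ∃ p : GPath G, p.label L = q.label L ++ r.label L ∧ p.source = q.source ∧
      p.range = r.range := by
  have hne : q.edges ++ r.edges ≠ [] := by simp [q.ne]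
  have hchain : (q.edges ++ r.edges).IsChain fun e f => G.rng e = G.src f := by
    refine List.isChain_append.mpr ⟨q.chain, r.chain, ?_⟩
    intro x hx y hy
    rw [List.getLast?_eq_some_getLast q.ne, Option.mem_some_iff] at hx
    rw [List.head?_eq_some_head r.ne, Option.mem_some_iff] at hy
    subst hx hy
    exact h
  refine ⟨⟨q.edges ++ r.edges, hne, hchain⟩, by simp [label], ?_, ?_⟩
  · exact congrArg G.src (List.head_append_of_ne_nil q.ne)
  · exact congrArg G.rng (List.getLast_append_right r.ne)

lemma exists_split (L : E → 𝒜) (p : GPath G) {u v : List 𝒜} (hu : u ≠ []) (hv : v ≠ [])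
    (h : p.label L = u ++ v) :
    ∃ q r : GPath G, q.label L = u ∧ r.label L = v ∧ q.source = p.source ∧
      r.range = p.range ∧ q.range = r.source := by
  have hlen : p.edges.length = u.length + v.length := by
    simpa [label] using congrArg List.length h
  have htake : p.edges.take u.length ≠ [] := by
    simp [List.take_eq_nil_iff, hu, p.ne]
  have hdrop : p.edges.drop u.length ≠ [] := by
    simp [List.drop_eq_nil_iff]; have := List.length_pos_iff.mpr hv; omega
  refine ⟨⟨_, htake, p.chain.take _⟩, ⟨_, hdrop, p.chain.drop _⟩, ?_, ?_, ?_, ?_, ?_⟩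
  · simpa [label, List.map_take] using congrArg (List.take u.length) h
  · simpa [label, List.map_drop] using congrArg (List.drop u.length) h
  · exact congrArg G.src (List.head_take _)
  · exact congrArg G.rng (List.getLast_drop _)
  · have hchain := p.chain
    rw [← List.take_append_drop u.length p.edges] at hchain
    exact (List.isChain_append.mp hchain).2.2 _ (List.getLast?_eq_some_getLast htake) _
      (List.head?_eq_some_head hdrop)

lemma range_mem_rngW (L : E → 𝒜) (p : GPath G) : p.range ∈ rngW G L (p.label L) :=
  ⟨p, rfl, rfl⟩

end GPath

section LabeledSpace

variable {G : DirGraph V E} {L : E → 𝒜}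

lemma relRng_append (A : Set V) {u v : List 𝒜} (hu : u ≠ []) (hv : v ≠ []) :
    relRng G L A (u ++ v) = relRng G L (relRng G L A u) v := by
  ext x
  constructor
  · rintro ⟨p, hp, hsrc, rfl⟩
    obtain ⟨q, r, hq, hr, hqs, hrr, hqr⟩ := p.exists_split L hu hv hp
    exact ⟨r, hr, ⟨q, hq, hqs ▸ hsrc, hqr⟩, hrr⟩
  · rintro ⟨r, hr, ⟨q, hq, hqs, hqr⟩, rfl⟩
    obtain ⟨p, hp, hps, hpr⟩ := q.exists_append L r hqr
    exact ⟨p, by rw [hp, hq, hr], hps ▸ hqs, hpr⟩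

lemma rngW_eq_relRng_univ (w : List 𝒜) : rngW G L w = relRng G L Set.univ w := by
  ext x
  exact ⟨fun ⟨p, hp, hx⟩ => ⟨p, hp, trivial, hx⟩, fun ⟨p, hp, _, hx⟩ => ⟨p, hp, hx⟩⟩

lemma rngW_append {u v : List 𝒜} (hu : u ≠ []) (hv : v ≠ []) :
    rngW G L (u ++ v) = relRng G L (rngW G L u) v := by
  simp only [rngW_eq_relRng_univ, relRng_append _ hu hv]

lemma IsLabelWord.ne_nil {w : List 𝒜} (h : IsLabelWord G L w) : w ≠ [] := by
  obtain ⟨p, rfl⟩ := h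
  exact p.label_ne_nil L

lemma relRng_eq_empty_of_not_isLabelWord {w : List 𝒜} (hw : ¬IsLabelWord G L w) (A : Set V) :
    relRng G L A w = ∅ :=
  Set.eq_empty_of_forall_notMem fun _ ⟨p, hp, _⟩ => hw ⟨p, hp⟩

lemma bbar_empty {A : Set V} (hA : Bbar G L A) : Bbar G L ∅ := by
  simpa using Bbar.diff A A hA hA

lemma bbar_relRng {A : Set V} (hA : Bbar G L A) (w : List 𝒜) : Bbar G L (relRng G L A w) := by
  by_cases hw : IsLabelWord G L w
  · exact Bbar.rel A w hA hw
  · simpa [relRng_eq_empty_of_not_isLabelWord hw] using bbar_empty hA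

lemma isLabelWord_singleton (hL : Function.Surjective L) (a : 𝒜) : IsLabelWord G L [a] := by
  obtain ⟨e, rfl⟩ := hL a
  exact ⟨⟨[e], List.cons_ne_nil e [], List.isChain_singleton e⟩, rfl⟩

lemma bbar_rngW (hL : Function.Surjective L) {w : List 𝒜} (hw : w ≠ []) :
    Bbar G L (rngW G L w) := by
  obtain ⟨a, v, rfl⟩ := List.exists_cons_of_ne_nil hw
  have ha : Bbar G L (rngW G L [a]) := Bbar.base [a] (isLabelWord_singleton hL a)
  rcases eq_or_ne v [] with rfl | hv
  · exact ha
  · rw [← List.singleton_append, rngW_append (List.cons_ne_nil a []) hv]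
    exact bbar_relRng ha v

lemma relRng_inter (sa : StandingAssumptions G L) {C D : Set V} (hC : Bbar G L C)
    (hD : Bbar G L D) (w : List 𝒜) :
    relRng G L (C ∩ D) w = relRng G L C w ∩ relRng G L D w := by
  by_cases hw : IsLabelWord G L w
  · exact (sa.wlr C D hC hD w hw).symm
  · simp [relRng_eq_empty_of_not_isLabelWord hw]

lemma InterClosure.bbar {𝒢 : Set (Set V)} (h𝒢 : ∀ g ∈ 𝒢, Bbar G L g) {C : Set V}
    (hC : C ∈ InterClosure 𝒢) : Bbar G L C := by
  induction hC with
  | of_mem hg => exact h𝒢 _ hg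
  | inter _ _ ihC ihD => exact Bbar.inter _ _ ihC ihD

lemma InterClosure.relRng_mem (sa : StandingAssumptions G L) {𝒢 : Set (Set V)}
    (h𝒢 : ∀ g ∈ 𝒢, Bbar G L g) {w : List 𝒜} (hw : ∀ g ∈ 𝒢, relRng G L g w ∈ 𝒢) {C : Set V}
    (hC : C ∈ InterClosure 𝒢) : relRng G L C w ∈ InterClosure 𝒢 := by
  induction hC with
  | of_mem hg => exact of_mem (hw _ hg)
  | inter hC hD ihC ihD =>
    rw [relRng_inter sa (InterClosure.bbar h𝒢 hC) (InterClosure.bbar h𝒢 hD)]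
    exact inter ihC ihD

end LabeledSpace

section Words

variable {B : Type*} [NonUnitalRing B]

lemma sWord_cons (s : 𝒜 → B) (a : 𝒜) {w : List 𝒜} (hw : w ≠ []) :
    sWord s (a :: w) = s a * sWord s w := by
  obtain ⟨b, v, rfl⟩ := List.exists_cons_of_ne_nil hw
  rfl

lemma sWord_append (s : 𝒜 → B) {u v : List 𝒜} (hu : u ≠ []) (hv : v ≠ []) :
    sWord s (u ++ v) = sWord s u * sWord s v := by
  induction u with
  | nil => exact absurd rfl hu
  | cons a u ih =>
    rcases eq_or_ne u [] with rfl | hu'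
    · exact sWord_cons s a hv
    · rw [List.cons_append, sWord_cons s a (List.append_ne_nil_of_left_ne_nil hu' v),
        ih hu', sWord_cons s a hu', mul_assoc]

end Words

namespace LRep

variable {G : DirGraph V E} {L : E → 𝒜} {B : Type*} [NonUnitalRing B] [StarRing B]
  (rep : LRep G L B)

lemma p_mul_sWord {A : Set V} (hA : Bbar G L A) {w : List 𝒜} (hw : w ≠ []) :
    rep.p A * sWord rep.s w = sWord rep.s w * rep.p (relRng G L A w) := by
  induction w generalizing A with
  | nil => exact absurd rfl hw
  | cons a w ih =>
    rcases eq_or_ne w [] with rfl | hw'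
    · exact rep.p_s A a hA
    · rw [sWord_cons rep.s a hw', ← mul_assoc, rep.p_s A a hA, mul_assoc,
        ih (bbar_relRng hA [a]) hw', ← mul_assoc, ← relRng_append A (List.cons_ne_nil a []) hw',
        List.singleton_append]

lemma star_sWord_mul_sWord (hL : Function.Surjective L) {w : List 𝒜} (hw : w ≠ []) :
    star (sWord rep.s w) * sWord rep.s w = rep.p (rngW G L w) := by
  induction w with
  | nil => exact absurd rfl hw
  | cons a w ih =>
    rcases eq_or_ne w [] with rfl | hw'
    · exact rep.s_s a
    · have ha : Bbar G L (rngW G L [a]) := bbar_rngW hL (List.cons_ne_nil a [])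
      rw [sWord_cons rep.s a hw', star_mul, mul_assoc, ← mul_assoc (star (rep.s a)),
        rep.s_s a, rep.p_mul_sWord ha hw', ← mul_assoc, ih hw',
        rep.p_mul _ _ (bbar_rngW hL hw') (bbar_relRng ha w),
        show rngW G L (a :: w) = _ from rngW_append (List.cons_ne_nil a []) hw',
        Set.inter_eq_self_of_subset_right]
      rintro x ⟨p, hp, -, hx⟩
      exact ⟨p, hp, hx⟩

lemma star_sWord_mul_sWord_eq_zero (hL : Function.Surjective L) :
    ∀ {v w : List 𝒜}, v ≠ [] → w ≠ [] → ¬v <+: w → ¬w <+: v →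
      star (sWord rep.s v) * sWord rep.s w = 0
  | [], _, hv, _, _, _ => absurd rfl hv
  | _, [], _, hw, _, _ => absurd rfl hw
  | a :: v, b :: w, _, _, hvw, hwv => by
    by_cases hab : a = b
    · subst hab
      have hv : v ≠ [] := by rintro rfl; exact hvw (by simp)
      have hw : w ≠ [] := by rintro rfl; exact hwv (by simp)
      rw [sWord_cons rep.s a hv, sWord_cons rep.s a hw, star_mul, mul_assoc,
        ← mul_assoc (star (rep.s a)), rep.s_s a,
        rep.p_mul_sWord (bbar_rngW hL (List.cons_ne_nil a [])) hw, ← mul_assoc,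
        star_sWord_mul_sWord_eq_zero hL hv hw (by simpa using hvw) (by simpa using hwv),
        zero_mul]
    · have key : star (rep.s a) * rep.s b = 0 := rep.s_orth a b hab
      have hleft : ∀ y, star (rep.s a) * y = 0 → star (sWord rep.s (a :: v)) * y = 0 := by
        intro y hy
        rcases eq_or_ne v [] with rfl | hv
        · exact hy
        · rw [sWord_cons rep.s a hv, star_mul, mul_assoc, hy, mul_zero]
      apply hleft
      rcases eq_or_ne w [] with rfl | hw
      · exact key
      · rw [sWord_cons rep.s b hw, ← mul_assoc, key, zero_mul]

lemma p_mul_self {C : Set V} (hC : Bbar G L C) : rep.p C * rep.p C = rep.p C := by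
  rw [rep.p_mul C C hC hC, Set.inter_self]

lemma elt_eq_mul_star {C : Set V} (hC : Bbar G L C) (μ ν : Option (List 𝒜)) :
    rep.elt μ C ν = rep.elt μ C none * star (rep.elt ν C none) := by
  cases μ <;> cases ν <;> simp only [elt, star_mul, rep.p_sa C hC, mul_assoc, rep.p_mul_self hC,
    ← mul_assoc (rep.p C) (rep.p C)]

lemma elt_mul_elt {C C' : Set V} (hC : Bbar G L C) (hC' : Bbar G L C')
    {μ μ' : Option (List 𝒜)} (hμ : ∀ u ∈ μ, u ≠ []) (hμ' : ∀ w ∈ μ', w ≠ []) :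
    rep.elt μ C none * rep.elt μ' C' none =
      rep.elt (μ.merge (· ++ ·) μ') (relRngE G L C μ' ∩ C') none := by
  cases μ' with
  | none =>
    cases μ <;> simp only [elt, relRngE, Option.merge_none_right, mul_assoc, rep.p_mul C C' hC hC']
  | some w =>
    have hw := hμ' w rfl
    have key : rep.p C * (sWord rep.s w * rep.p C') =
        sWord rep.s w * rep.p (relRng G L C w ∩ C') := by
      rw [← mul_assoc, rep.p_mul_sWord hC hw, mul_assoc, rep.p_mul _ _ (bbar_relRng hC w) hC']
    cases μ with
    | none => simpa [elt, relRngE] using key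
    | some u =>
      simp only [elt, relRngE, Option.merge_some_some, mul_assoc, key,
        sWord_append rep.s (hμ u rfl) hw]

lemma elt_merge_some {v : List 𝒜} (hv : v ≠ []) {τ : Option (List 𝒜)} (hτ : ∀ w ∈ τ, w ≠ [])
    (C : Set V) :
    rep.elt ((some v).merge (· ++ ·) τ) C none = sWord rep.s v * rep.elt τ C none := by
  cases τ with
  | none => rfl
  | some w => simp [elt, sWord_append rep.s hv (hτ w rfl), mul_assoc]

lemma star_elt_mul_sWord_mul (hL : Function.Surjective L) {D : Set V} (hD : Bbar G L D)
    {v : List 𝒜} (hv : v ≠ []) (y : B) :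
    star (rep.elt (some v) D none) * (sWord rep.s v * y) = rep.p (D ∩ rngW G L v) * y := by
  rw [elt, star_mul, rep.p_sa D hD, mul_assoc, ← mul_assoc (star _),
    rep.star_sWord_mul_sWord hL hv, ← mul_assoc, rep.p_mul _ _ hD (bbar_rngW hL hv)]

lemma star_elt_mul_elt_eq_zero (hL : Function.Surjective L) {v w : List 𝒜} (hv : v ≠ [])
    (hw : w ≠ []) (hvw : ¬v <+: w) (hwv : ¬w <+: v) (D C : Set V) :
    star (rep.elt (some v) D none) * rep.elt (some w) C none = 0 := by
  rw [elt, elt, star_mul, mul_assoc (star (rep.p D)), ← mul_assoc (star (sWord rep.s v)),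
    rep.star_sWord_mul_sWord_eq_zero hL hv hw hvw hwv, zero_mul, mul_zero]

end LRep

structure IsAdmissible (G : DirGraph V E) (L : E → 𝒜) (𝒲 : Set (List 𝒜)) (𝒞 : Set (Set V)) :
    Prop where
  ne_nil : ∀ w ∈ 𝒲, w ≠ []
  append_mem : ∀ u ∈ 𝒲, ∀ v ∈ 𝒲, u ++ v ∈ 𝒲
  mem_of_append_mem : ∀ u τ, τ ≠ [] → u ++ τ ∈ 𝒲 → τ ∈ 𝒲
  bbar : ∀ C ∈ 𝒞, Bbar G L C
  inter_mem : ∀ C ∈ 𝒞, ∀ D ∈ 𝒞, C ∩ D ∈ 𝒞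
  relRng_mem : ∀ C ∈ 𝒞, ∀ w ∈ 𝒲, relRng G L C w ∈ 𝒞
  rngW_mem : ∀ w ∈ 𝒲, rngW G L w ∈ 𝒞

def LRep.halfElts {G : DirGraph V E} {L : E → 𝒜} {B : Type*} [NonUnitalRing B] [StarRing B]
    (rep : LRep G L B) (𝒲 : Set (List 𝒜)) (𝒞 : Set (Set V)) : Set B :=
  {x | ∃ μ : Option (List 𝒜), (∀ w ∈ μ, w ∈ 𝒲) ∧ ∃ C ∈ 𝒞, rep.elt μ C none = x}

namespace IsAdmissible

variable {G : DirGraph V E} {L : E → 𝒜} {𝒲 : Set (List 𝒜)} {𝒞 : Set (Set V)}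
  (h : IsAdmissible G L 𝒲 𝒞)
include h

lemma merge_mem {μ τ : Option (List 𝒜)} (hμ : ∀ w ∈ μ, w ∈ 𝒲) (hτ : ∀ w ∈ τ, w ∈ 𝒲) :
    ∀ w ∈ μ.merge (· ++ ·) τ, w ∈ 𝒲 := by
  cases μ <;> cases τ <;> simp_all [h.append_mem]

lemma relRngE_mem {C : Set V} (hC : C ∈ 𝒞) {τ : Option (List 𝒜)} (hτ : ∀ w ∈ τ, w ∈ 𝒲) :
    relRngE G L C τ ∈ 𝒞 := by
  cases τ with
  | none => exact hC
  | some w => exact h.relRng_mem C hC w (hτ w rfl)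

lemma merge_trichotomy {ν μ : Option (List 𝒜)} (hν : ∀ w ∈ ν, w ∈ 𝒲) (hμ : ∀ w ∈ μ, w ∈ 𝒲) :
    (∃ τ, (∀ w ∈ τ, w ∈ 𝒲) ∧ μ = ν.merge (· ++ ·) τ) ∨
    (∃ τ, (∀ w ∈ τ, w ∈ 𝒲) ∧ ν = μ.merge (· ++ ·) τ) ∨
    ∃ v w, ν = some v ∧ μ = some w ∧ ¬v <+: w ∧ ¬w <+: v := by
  have extend : ∀ v τ, v ++ τ ∈ 𝒲 →
      ∃ τo : Option (List 𝒜), (∀ w ∈ τo, w ∈ 𝒲) ∧ some (v ++ τ) = (some v).merge (· ++ ·) τo := by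
    intro v τ hvτ
    rcases eq_or_ne τ [] with rfl | hτ
    · exact ⟨none, by simp, by simp⟩
    · exact ⟨some τ, by simpa using h.mem_of_append_mem v τ hτ hvτ, rfl⟩
  cases ν with
  | none => exact Or.inl ⟨μ, hμ, by simp⟩
  | some v =>
    cases μ with
    | none => exact Or.inr (Or.inl ⟨some v, hν, by simp⟩)
    | some w =>
      by_cases hvw : v <+: w
      · obtain ⟨τ, rfl⟩ := hvw
        exact Or.inl (extend v τ (hμ _ rfl))
      by_cases hwv : w <+: v
      · obtain ⟨τ, rfl⟩ := hwv
        exact Or.inr (Or.inl (extend w τ (hν _ rfl)))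
      exact Or.inr (Or.inr ⟨v, w, rfl, rfl, hvw, hwv⟩)

variable {B : Type*} [NonUnitalRing B] [StarRing B] (rep : LRep G L B)

lemma mul_mem_halfElts {x y : B} (hx : x ∈ rep.halfElts 𝒲 𝒞) (hy : y ∈ rep.halfElts 𝒲 𝒞) :
    x * y ∈ rep.halfElts 𝒲 𝒞 := by
  obtain ⟨μ, hμ, C, hC, rfl⟩ := hx
  obtain ⟨μ', hμ', C', hC', rfl⟩ := hy
  rw [rep.elt_mul_elt (h.bbar C hC) (h.bbar C' hC') (fun w hw => h.ne_nil w (hμ w hw))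
    (fun w hw => h.ne_nil w (hμ' w hw))]
  exact ⟨_, h.merge_mem hμ hμ', _, h.inter_mem _ (h.relRngE_mem hC hμ') _ hC', rfl⟩

lemma star_elt_mul_elt_merge_mem (hL : Function.Surjective L) {ν τ : Option (List 𝒜)}
    (hν : ∀ w ∈ ν, w ∈ 𝒲) (hτ : ∀ w ∈ τ, w ∈ 𝒲) {D C : Set V} (hD : D ∈ 𝒞) (hC : C ∈ 𝒞) :
    star (rep.elt ν D none) * rep.elt (ν.merge (· ++ ·) τ) C none ∈ rep.halfElts 𝒲 𝒞 := by
  have hτC : rep.elt τ C none ∈ rep.halfElts 𝒲 𝒞 := ⟨τ, hτ, C, hC, rfl⟩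
  cases ν with
  | none =>
    rw [Option.merge_none_left, LRep.elt, rep.p_sa D (h.bbar D hD)]
    exact h.mul_mem_halfElts rep ⟨none, by simp, D, hD, rfl⟩ hτC
  | some v =>
    have hv : v ≠ [] := h.ne_nil v (hν v rfl)
    rw [rep.elt_merge_some hv (fun w hw => h.ne_nil w (hτ w hw)),
      rep.star_elt_mul_sWord_mul hL (h.bbar D hD) hv]
    exact h.mul_mem_halfElts rep
      ⟨none, by simp, _, h.inter_mem D hD _ (h.rngW_mem v (hν v rfl)), rfl⟩ hτC

lemma star_mul_mem_halfElts (hL : Function.Surjective L) {x y : B}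
    (hx : x ∈ rep.halfElts 𝒲 𝒞) (hy : y ∈ rep.halfElts 𝒲 𝒞) :
    star x * y = 0 ∨ star x * y ∈ rep.halfElts 𝒲 𝒞 ∨ star y * x ∈ rep.halfElts 𝒲 𝒞 := by
  obtain ⟨ν, hν, D, hD, rfl⟩ := hx
  obtain ⟨μ, hμ, C, hC, rfl⟩ := hy
  rcases h.merge_trichotomy hν hμ with ⟨τ, hτ, rfl⟩ | ⟨τ, hτ, rfl⟩ | ⟨v, w, rfl, rfl, hvw, hwv⟩
  · exact Or.inr (Or.inl (h.star_elt_mul_elt_merge_mem rep hL hν hτ hD hC))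
  · exact Or.inr (Or.inr (h.star_elt_mul_elt_merge_mem rep hL hμ hτ hC hD))
  · exact Or.inl (rep.star_elt_mul_elt_eq_zero hL (h.ne_nil v (hν v rfl))
      (h.ne_nil w (hμ w rfl)) hvw hwv D C)

end IsAdmissible

section CStarAlgebra

variable {G : DirGraph V E} {L : E → 𝒜} {𝒲 : Set (List 𝒜)} {𝒞 : Set (Set V)}
  {B : Type*} [NonUnitalCStarAlgebra B]

lemma LRep.sWord_eq_zero (rep : LRep G L B) (hL : Function.Surjective L)
    {w : List 𝒜} (hw : w ≠ []) (h : rngW G L w = ∅) : sWord rep.s w = 0 := by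
  rw [← CStarRing.star_mul_self_eq_zero_iff, rep.star_sWord_mul_sWord hL hw, h, rep.p_empty]

lemma IsAdmissible.finite_halfElts (h : IsAdmissible G L 𝒲 𝒞) (rep : LRep G L B)
    (hL : Function.Surjective L) (h𝒞 : 𝒞.Finite)
    (h𝒲 : {w ∈ 𝒲 | (rngW G L w).Nonempty}.Finite) : (rep.halfElts 𝒲 𝒞).Finite := by
  refine (((h𝒲.image some).insert none).image2 (fun μ C => rep.elt μ C none) h𝒞).insert 0
    |>.subset ?_
  rintro _ ⟨_ | w, hμ, C, hC, rfl⟩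
  · exact Or.inr ⟨none, Set.mem_insert _ _, C, hC, rfl⟩
  · have hw : w ∈ 𝒲 := hμ w rfl
    rcases (rngW G L w).eq_empty_or_nonempty with hr | hr
    · left
      rw [LRep.elt, rep.sWord_eq_zero hL (h.ne_nil w hw) hr, zero_mul]
    · exact Or.inr ⟨some w, Or.inr ⟨w, ⟨hw, hr⟩, rfl⟩, C, hC, rfl⟩

theorem IsAdmissible.exists_finiteDimensional (h : IsAdmissible G L 𝒲 𝒞) (rep : LRep G L B)
    (hL : Function.Surjective L) (h𝒞 : 𝒞.Finite)
    (h𝒲 : {w ∈ 𝒲 | (rngW G L w).Nonempty}.Finite) :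
    ∃ D : NonUnitalStarSubalgebra ℂ B, FiniteDimensional ℂ D ∧
      ∀ μ ν : Option (List 𝒜), (∀ w ∈ μ, w ∈ 𝒲) → (∀ w ∈ ν, w ∈ 𝒲) →
        ∀ C ∈ 𝒞, rep.elt μ C ν ∈ D := by
  obtain ⟨D, hD, hmem⟩ := exists_finiteDimensional_of_mul_star (𝕜 := ℂ)
    (h.finite_halfElts rep hL h𝒞 h𝒲) (fun _ hx _ hy => h.mul_mem_halfElts rep hx hy)
    (fun _ hx _ hy => h.star_mul_mem_halfElts rep hL hx hy)
  refine ⟨D, hD, fun μ ν hμ hν C hC => ?_⟩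
  rw [rep.elt_eq_mul_star (h.bbar C hC)]
  exact hmem _ ⟨μ, hμ, C, hC, rfl⟩ _ ⟨ν, hν, C, hC, rfl⟩

end CStarAlgebra

section ConditionA

variable {G : DirGraph V E} {L : E → 𝒜}

lemma chainExists_of_isChain {ps : List (GPath G)} (Bs : ℕ → Set V) (K : ℕ)
    (hps : ps.IsChain fun x y => x.range = y.source)
    (h : ∀ (k : ℕ) (hk : k < ps.length),
      ps[k].length ≤ K ∧ ps[k].source ∈ Bs k ∧ ps[k].range ∈ Bs (k + 1)) :
    ChainExists G Bs K ps.length :=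
  ⟨fun j => ps[j], fun j => h j j.2, fun j hj => List.isChain_iff_getElem.mp hps j hj⟩

lemma GPath.exists_chain_of_label_eq_flatten (L : E → 𝒜) :
    ∀ (l : List (List 𝒜)) (p : GPath G), (∀ σ ∈ l, σ ≠ []) → p.label L = l.flatten →
      ∃ ps : List (GPath G), ps.map (GPath.label L) = l ∧
        (ps.IsChain fun x y => x.range = y.source) ∧ ∀ x ∈ ps.head?, x.source = p.source
  | [], p, _, hp => absurd hp (p.label_ne_nil L)
  | [σ], p, _, hp => ⟨[p], by simpa using hp, List.isChain_singleton p, by simp⟩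
  | σ :: τ :: l, p, hne, hp => by
    have hσ : σ ≠ [] := hne σ (by simp)
    have hrest : (τ :: l).flatten ≠ [] := by simp [hne τ (by simp)]
    obtain ⟨q, r, hq, hr, hqs, -, hqr⟩ := p.exists_split L hσ hrest hp
    obtain ⟨ps, hps, hchain, hhead⟩ :=
      GPath.exists_chain_of_label_eq_flatten L (τ :: l) r (fun x hx => hne x (by simp [hx])) hr
    obtain ⟨r', ps', rfl⟩ : ∃ r' ps', ps = r' :: ps' := List.exists_cons_of_ne_nil (by
      rintro rfl; simp at hps)
    refine ⟨q :: r' :: ps', by simp_all, ?_, by simpa using hqs⟩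
    exact List.isChain_cons_cons.mpr ⟨hqr.trans (hhead r' rfl).symm, hchain⟩

lemma chainExists_of_mem_relRng_flatten {b : Set V} {l : List (List 𝒜)} {K : ℕ}
    (hl : ∀ σ ∈ l, σ ≠ [] ∧ σ.length ≤ K) {v : V} (hv : v ∈ relRng G L b l.flatten) :
    ChainExists G (fun j => (b :: l.map (rngW G L)).getD j ∅) K l.length := by
  obtain ⟨p, hp, hsrc, -⟩ := hv
  obtain ⟨ps, rfl, hchain, hhead⟩ :=
    p.exists_chain_of_label_eq_flatten L l (fun σ hσ => (hl σ hσ).1) hp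
  rw [List.length_map]
  refine chainExists_of_isChain _ K hchain fun k hk => ⟨?_, ?_, ?_⟩
  · rw [← GPath.length_label L]
    exact (hl _ (List.mem_map_of_mem (List.getElem_mem hk))).2
  · cases k with
    | zero => simpa [hhead ps[0] (by simp [List.head?_eq_getElem?])] using hsrc
    | succ k =>
      rw [← List.isChain_iff_getElem.mp hchain k hk]
      simpa [List.getElem?_eq_getElem (Nat.lt_of_succ_lt hk)] using ps[k].range_mem_rngW L
  · simpa [List.getElem?_eq_getElem hk] using ps[k].range_mem_rngW L

lemma CondA.exists_not_chainExists (h : CondA G L) {ℱ : Set (Set V)} (hℱ : ℱ.Finite)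
    (hB : ∀ A ∈ ℱ, Bbar G L A) {K : ℕ} (hK : 1 ≤ K) :
    ∃ m0, ∀ n ≥ m0, ∀ Bs : ℕ → Set V, (∀ j ≤ n, Bs j ∈ ℱ) → ¬ChainExists G Bs K n := by
  let e := hℱ.toFinset.equivFin
  obtain ⟨m0, -, hm0⟩ := h _ (fun i => (e.symm i : Set V))
    (fun i => hB _ (hℱ.mem_toFinset.mp (e.symm i).2)) K hK
  refine ⟨m0, fun n hn Bs hBs hchain => hm0 (n + 1) (by omega)
    (fun j => e ⟨Bs (min j n), hℱ.mem_toFinset.mpr (hBs _ (min_le_right j n))⟩) ?_⟩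
  obtain ⟨xs, hxs, hcomp⟩ := hchain
  refine ⟨xs, fun j => ?_, hcomp⟩
  simpa [min_eq_left j.2.le, min_eq_left (Nat.succ_le_of_lt j.2)] using hxs j

lemma CondA.exists_relRng_flatten_eq_empty (h : CondA G L) {ℱ : Set (Set V)}
    (hℱ : ℱ.Finite) (hB : ∀ A ∈ ℱ, Bbar G L A) {S : Set (List 𝒜)} (hS : S.Finite)
    (hS0 : ∀ σ ∈ S, σ ≠ []) (hSℱ : ∀ σ ∈ S, rngW G L σ ∈ ℱ) :
    ∃ m0, ∀ b ∈ ℱ, ∀ l : List (List 𝒜), (∀ σ ∈ l, σ ∈ S) → m0 ≤ l.length →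
      relRng G L b l.flatten = ∅ := by
  obtain ⟨K, hK⟩ := (hS.image List.length).bddAbove
  obtain ⟨m0, hm0⟩ := h.exists_not_chainExists hℱ hB (Nat.le_add_left 1 K)
  refine ⟨m0, fun b hb l hl hlen => Set.eq_empty_of_forall_notMem fun v hv => ?_⟩
  refine hm0 l.length hlen _ (fun j hj => ?_) (chainExists_of_mem_relRng_flatten
    (fun σ hσ => ⟨hS0 σ (hl σ hσ), (hK ⟨σ, hl σ hσ, rfl⟩).trans (Nat.le_succ K)⟩) hv)
  rcases j with _ | j
  · exact hb
  · simpa [List.getElem?_eq_getElem (show j < l.length by omega)] using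
      hSℱ _ (hl _ (List.getElem_mem _))

end ConditionA

section Construction

variable {G : DirGraph V E} {L : E → 𝒜}

lemma isAdmissible_concatClosure (sa : StandingAssumptions G L) {S : Set (List 𝒜)}
    (hS0 : ∀ σ ∈ S, σ ≠ []) (hSsuf : ∀ u τ, τ ≠ [] → u ++ τ ∈ S → τ ∈ S) {ℱ : Set (Set V)}
    (hℱ : ∀ A ∈ ℱ, Bbar G L A) (hSℱ : ∀ σ ∈ S, rngW G L σ ∈ ℱ) :
    IsAdmissible G L (concatClosure S)
      (InterClosure (ℱ ∪ Set.image2 (relRng G L) ℱ (concatClosure S))) := by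
  have ne_nil := fun w (hw : w ∈ concatClosure S) => ne_nil_of_mem_concatClosure hS0 hw
  have h𝒢 : ∀ g ∈ ℱ ∪ Set.image2 (relRng G L) ℱ (concatClosure S), Bbar G L g := by
    rintro _ (hg | ⟨b, hb, w, -, rfl⟩)
    exacts [hℱ _ hg, bbar_relRng (hℱ b hb) w]
  refine
    { ne_nil := ne_nil
      append_mem := fun u hu v hv => append_mem_concatClosure hu hv
      mem_of_append_mem := fun u τ hτ ⟨l, _, hlS, hl⟩ =>
        mem_concatClosure_of_append_mem hSsuf hτ l hlS u hl.symm
      bbar := fun C => InterClosure.bbar h𝒢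
      inter_mem := fun C hC D hD => .inter hC hD
      relRng_mem := fun C hC w hw => InterClosure.relRng_mem sa h𝒢 ?_ hC
      rngW_mem := ?_ }
  · rintro _ (hg | ⟨b, hb, u, hu, rfl⟩)
    · exact Or.inr ⟨_, hg, w, hw, rfl⟩
    · exact Or.inr ⟨b, hb, u ++ w, append_mem_concatClosure hu hw,
        relRng_append b (ne_nil u hu) (ne_nil w hw)⟩
  · rintro _ ⟨l, hl, hlS, rfl⟩
    obtain ⟨σ, l, rfl⟩ := List.exists_cons_of_ne_nil hl
    have hσ : σ ∈ S := hlS σ List.mem_cons_self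
    rcases eq_or_ne l [] with rfl | hl'
    · exact .of_mem (Or.inl (by simpa using hSℱ σ hσ))
    · have hlS' : ∀ x ∈ l, x ∈ S := fun x hx => hlS x (List.mem_cons_of_mem σ hx)
      have hmem : l.flatten ∈ concatClosure S := ⟨l, hl', hlS', rfl⟩
      refine .of_mem (Or.inr ⟨_, hSℱ σ hσ, _, hmem, ?_⟩)
      rw [List.flatten_cons, rngW_append (hS0 σ hσ) (ne_nil _ hmem)]

lemma CondA.finite_interClosure_concatClosure (h : CondA G L) {S : Set (List 𝒜)}
    (hS : S.Finite) (hS0 : ∀ σ ∈ S, σ ≠ []) {ℱ : Set (Set V)} (hℱ : ℱ.Finite)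
    (hB : ∀ A ∈ ℱ, Bbar G L A) (hSℱ : ∀ σ ∈ S, rngW G L σ ∈ ℱ) :
    (InterClosure (ℱ ∪ Set.image2 (relRng G L) ℱ (concatClosure S))).Finite ∧
      {w ∈ concatClosure S | (rngW G L w).Nonempty}.Finite := by
  obtain ⟨m0, hm0⟩ := h.exists_relRng_flatten_eq_empty hℱ hB hS hS0 hSℱ
  constructor
  · refine InterClosure.finite
      (((hℱ.union (hℱ.image2 (relRng G L) (finite_flatten_of_length_le hS m0))).insert ∅).subset ?_)
    rintro _ (hg | ⟨b, hb, _, ⟨l, -, hlS, rfl⟩, rfl⟩)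
    · exact Or.inr (Or.inl hg)
    · by_cases hlen : m0 ≤ l.length
      · exact Or.inl (hm0 b hb l hlS hlen)
      · exact Or.inr (Or.inr ⟨b, hb, _, ⟨l, hlS, by omega, rfl⟩, rfl⟩)
  · refine (finite_flatten_of_length_le hS (m0 + 1)).subset ?_
    rintro _ ⟨⟨l, hl, hlS, rfl⟩, hne⟩
    refine ⟨l, hlS, not_lt.mp fun hlen => ?_, rfl⟩
    obtain ⟨σ, l, rfl⟩ := List.exists_cons_of_ne_nil hl
    have hσ : σ ∈ S := hlS σ List.mem_cons_self
    have hlS' : ∀ x ∈ l, x ∈ S := fun x hx => hlS x (List.mem_cons_of_mem σ hx)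
    have hl' : l ≠ [] := by rintro rfl; simp at hlen
    have hne' : l.flatten ≠ [] := ne_nil_of_mem_concatClosure hS0 ⟨l, hl', hlS', rfl⟩
    rw [List.flatten_cons, rngW_append (hS0 σ hσ) hne',
      hm0 _ (hSℱ σ hσ) l hlS' (by simp at hlen; omega)] at hne
    exact Set.not_nonempty_empty hne

theorem CondA.exists_isAdmissible (h : CondA G L) (sa : StandingAssumptions G L)
    (hL : Function.Surjective L) {W : Set (List 𝒜)} (hW : W.Finite) (hW0 : ∀ w ∈ W, w ≠ [])
    {𝒜s : Set (Set V)} (h𝒜s : 𝒜s.Finite) (hB : ∀ A ∈ 𝒜s, Bbar G L A) :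
    ∃ 𝒲 𝒞, IsAdmissible G L 𝒲 𝒞 ∧ W ⊆ 𝒲 ∧ 𝒜s ⊆ 𝒞 ∧ 𝒞.Finite ∧
      {w ∈ 𝒲 | (rngW G L w).Nonempty}.Finite := by
  set S : Set (List 𝒜) := {σ | σ ≠ [] ∧ ∃ w ∈ W, σ <:+ w}
  have hS : S.Finite := (hW.biUnion fun w _ => w.tails.finite_toSet).subset
    fun σ ⟨_, w, hw, hσ⟩ => Set.mem_biUnion hw ((List.mem_tails σ w).mpr hσ)
  have hS0 : ∀ σ ∈ S, σ ≠ [] := fun σ hσ => hσ.1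
  have hSsuf : ∀ u τ, τ ≠ [] → u ++ τ ∈ S → τ ∈ S :=
    fun u τ hτ ⟨_, w, hw, huτ⟩ => ⟨hτ, w, hw, (List.suffix_append u τ).trans huτ⟩
  have hℱ : ∀ A ∈ 𝒜s ∪ rngW G L '' S, Bbar G L A := by
    rintro _ (hA | ⟨σ, hσ, rfl⟩)
    exacts [hB _ hA, bbar_rngW hL hσ.1]
  have hSℱ : ∀ σ ∈ S, rngW G L σ ∈ 𝒜s ∪ rngW G L '' S := fun σ hσ => Or.inr ⟨σ, hσ, rfl⟩
  obtain ⟨h𝒞, h𝒲⟩ := h.finite_interClosure_concatClosure hS hS0 (h𝒜s.union (hS.image _)) hℱ hSℱ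
  exact ⟨_, _, isAdmissible_concatClosure sa hS0 hSsuf hℱ hSℱ,
    fun w hw => mem_concatClosure_of_mem ⟨hW0 w hw, w, hw, List.suffix_refl w⟩,
    fun A hA => .of_mem (Or.inl (Or.inl hA)), h𝒞, h𝒲⟩

end Construction

theorem condA_finite_selfadjoint_in_finite_dim_general {V E 𝒜 B : Type*}
    [NonUnitalCStarAlgebra B]
    (G : DirGraph V E) (L : E → 𝒜) (hL : Function.Surjective L)
    (sa : StandingAssumptions G L)
    (hCondA : CondA G L)
    (rep : LRep G L B)
    (N : ℕ) (αs βs : Fin N → Option (List 𝒜)) (As : Fin N → Set V)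
    (hAs : ∀ i, Bbar G L (As i))
    (hαs : ∀ (i : Fin N) (w : List 𝒜), αs i = some w → IsLabelWord G L w)
    (hβs : ∀ (i : Fin N) (w : List 𝒜), βs i = some w → IsLabelWord G L w) :
    ∃ D : NonUnitalStarSubalgebra ℂ B, FiniteDimensional ℂ D ∧
      ∀ i, rep.elt (αs i) (As i) (βs i) ∈ D := by
  set W : Set (List 𝒜) := ⋃ i, {w | αs i = some w ∨ βs i = some w}
  have hW : W.Finite := Set.finite_iUnion fun i =>
    ((αs i).toList ++ (βs i).toList).finite_toSet.subset fun w hw => by simpa using hw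
  have hW0 : ∀ w ∈ W, w ≠ [] := by
    rintro w ⟨_, ⟨i, rfl⟩, hw | hw⟩
    exacts [(hαs i w hw).ne_nil, (hβs i w hw).ne_nil]
  obtain ⟨𝒲, 𝒞, hadm, hW𝒲, hA𝒞, h𝒞, h𝒲⟩ :=
    hCondA.exists_isAdmissible sa hL hW hW0 (Set.finite_range As) (Set.forall_mem_range.mpr hAs)
  obtain ⟨D, hD, hmem⟩ := hadm.exists_finiteDimensional rep hL h𝒞 h𝒲
  refine ⟨D, hD, fun i => hmem _ _ ?_ ?_ _ (hA𝒞 ⟨i, rfl⟩)⟩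
  · exact fun w hw => hW𝒲 (Set.mem_iUnion.mpr ⟨i, Or.inl hw⟩)
  · exact fun w hw => hW𝒲 (Set.mem_iUnion.mpr ⟨i, Or.inr hw⟩)

/-- content of the proof of Theorem 4.4. If `(E, L, 𝔅̄)`
satisfies condition (a), then for every representation `{s_a, p_A}` in a
C*-algebra, any finite self-adjoint set
`F = {s_{α_i} p_{A_i} s_{β_i}* : 1 ≤ i ≤ N}` (with `A_i ∈ 𝔅̄`,
`A_i ⊆ r(α_i) ∩ r(β_i)`, and `α_i, β_i` labeled paths or the empty word) is
contained in a finite-dimensional *-subalgebra. -/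
theorem condA_finite_selfadjoint_in_finite_dim {V E 𝒜 B : Type*}
    [Countable V] [Countable E] [Countable 𝒜]
    [NonUnitalCStarAlgebra B]
    (G : DirGraph V E) (L : E → 𝒜) (hL : Function.Surjective L)
    (sa : StandingAssumptions G L)
    (hCondA : CondA G L)
    (rep : LRep G L B)
    (N : ℕ) (αs βs : Fin N → Option (List 𝒜)) (As : Fin N → Set V)
    (hAs : ∀ i, Bbar G L (As i))
    (hαs : ∀ (i : Fin N) (w : List 𝒜), αs i = some w → IsLabelWord G L w)
    (hβs : ∀ (i : Fin N) (w : List 𝒜), βs i = some w → IsLabelWord G L w)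
    (hsub : ∀ i, As i ⊆ owordRng G L (αs i) ∩ owordRng G L (βs i))
    (hselfadj : ∀ i, ∃ j,
      star (rep.elt (αs i) (As i) (βs i)) = rep.elt (αs j) (As j) (βs j)) :
    ∃ D : NonUnitalStarSubalgebra ℂ B, FiniteDimensional ℂ D ∧
      ∀ i, rep.elt (αs i) (As i) (βs i) ∈ D :=
  condA_finite_selfadjoint_in_finite_dim_general G L hL sa hCondA rep N αs βs As hAs hαs hβs

end
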